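/- Diamond on S²₁ implies tail club guessing on S²₁: if ◊(S²₁) holds, then there is a sequence ⟨η_δ : δ ∈ S²₁⟩ such that each η_δ is a closed copy of ω₁ (a closed subset of δ of order type ω₁) cofinal in δ, and for every club C ⊆ ω₂ there exist δ ∈ S²₁ and δ' < δ with η_δ \ δ' ⊆ C. -/

import Mathlib

open Cardinal Set

def IsClubOrd (C : Set Ordinal) (δ : Ordinal) : Prop :=
  (∀ x ∈ C, x < δ) ∧ (∀ x < δ, ∃ y ∈ C, x ≤ y) ∧
  (∀ x, x < δ → x ≠ 0 → (∀ y < x, ∃ z ∈ C, y < z ∧ z < x) → x ∈ C)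

def S21 (δ : Ordinal) : Prop := δ < (aleph 2).ord ∧ Ordinal.cof δ = aleph 1

def HasOrderType (X : Set Ordinal) (α : Ordinal) : Prop :=
  ∃ g : Ordinal → Ordinal, StrictMonoOn g (Set.Iio α) ∧ X = g '' Set.Iio α

/-!
For `δ ∈ S²₁` let `η δ` be a club of order type `ω₁ = cf δ` in `δ`, taken inside the guess `A δ`
whenever `A δ` is club in `δ`. Given a club `C ⊆ ω₂`, its accumulation points form a club because
`cf ω₂ > ω`, so ◊ yields `δ ∈ S²₁` accumulating `C` with `A δ = C ∩ δ`. Then `A δ` is club in `δ`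
and `η δ ⊆ C`, so `C` is guessed with no tail cut off at all.

A club of order type `cf δ` inside a club `D` of `δ` is the range of a continuous increasing
recursion through `D` that dominates a cofinal sequence of length `cf δ`.

All of this lives below `ω₂`, so it is carried out in `Ordinal.{0}` and transported along
`Ordinal.lift` to the universes of the statement.
-/

open Order

universe u v

def IsAccOrd (x : Ordinal) (C : Set Ordinal) : Prop :=
  x ≠ 0 ∧ ∀ y < x, ∃ z ∈ C, y < z ∧ z < x

section Clubs

variable {C D : Set Ordinal.{u}} {x δ κ : Ordinal.{u}}

theorem IsAccOrd.mono (hCD : C ⊆ D) (hx : IsAccOrd x C) : IsAccOrd x D :=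
  ⟨hx.1, fun y hy ↦ let ⟨z, hz, hyz⟩ := hx.2 y hy; ⟨z, hCD hz, hyz⟩⟩

theorem IsClubOrd.mem_of_isAccOrd (hC : IsClubOrd C δ) (hx : x < δ) (hacc : IsAccOrd x C) :
    x ∈ C :=
  hC.2.2 x hx hacc.1 hacc.2

theorem IsClubOrd.isAccOrd (hC : IsClubOrd C δ) (hδ : IsSuccLimit δ) : IsAccOrd δ C := by
  refine ⟨hδ.ne_bot, fun y hy ↦ ?_⟩
  obtain ⟨z, hz, hyz⟩ := hC.2.1 (y + 1) (hδ.add_one_lt hy)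
  exact ⟨z, hz, (lt_add_one y).trans_le hyz, hC.1 z hz⟩

theorem isClubOrd_Iio (δ : Ordinal) : IsClubOrd (Iio δ) δ :=
  ⟨fun _ h ↦ h, fun x hx ↦ ⟨x, hx, le_rfl⟩, fun _ hx _ _ ↦ hx⟩

theorem IsAccOrd.isClubOrd_inter_Iio (hδ : IsAccOrd δ C) (hC : IsClubOrd C κ) (hδκ : δ < κ) :
    IsClubOrd (C ∩ Iio δ) δ := by
  refine ⟨fun x hx ↦ hx.2, fun x hx ↦ ?_, fun x hx hx0 hacc ↦ ⟨?_, hx⟩⟩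
  · obtain ⟨z, hz, hxz, hzδ⟩ := hδ.2 x hx
    exact ⟨z, ⟨hz, hzδ⟩, hxz.le⟩
  · exact hC.mem_of_isAccOrd (hx.trans hδκ) (IsAccOrd.mono inter_subset_left ⟨hx0, hacc⟩)

/-- Climb `ω` times through `C` above `x`: the supremum stays below `δ` as `cf δ > ω`. -/
theorem IsAccOrd.exists_isAccOrd_gt (hδ : IsAccOrd δ C) (hcof : ℵ₀ < δ.cof) (hx : x < δ) :
    ∃ s, x < s ∧ s < δ ∧ IsAccOrd s C := by
  choose! next hnext using hδ.2
  have hlt : ∀ n, next^[n] x < δ := by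
    intro n
    induction n with
    | zero => exact hx
    | succ n ih => rw [Function.iterate_succ_apply']; exact (hnext _ ih).2.2
  have hstep : ∀ n, next^[n + 1] x ∈ C ∧ next^[n] x < next^[n + 1] x := fun n ↦ by
    rw [Function.iterate_succ_apply']
    exact ⟨(hnext _ (hlt n)).1, (hnext _ (hlt n)).2.1⟩
  have hle : ∀ n, next^[n] x ≤ ⨆ n, next^[n] x := Ordinal.le_iSup _
  have hxs : x < ⨆ n, next^[n] x := (hstep 0).2.trans_le (hle 1)
  refine ⟨⨆ n, next^[n] x, hxs, Ordinal.lift_iSup_lt_of_lt_cof (by simpa using hcof) hlt,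
    (pos_of_gt hxs).ne', fun y hy ↦ ?_⟩
  obtain ⟨n, hn⟩ := Ordinal.lt_iSup_iff.1 hy
  exact ⟨_, (hstep n).1, hn.trans (hstep n).2, (hstep (n + 1)).2.trans_le (hle (n + 2))⟩

theorem IsAccOrd.isClubOrd_setOf_isAccOrd (hδ : IsAccOrd δ C) (hcof : ℵ₀ < δ.cof) :
    IsClubOrd {x | x < δ ∧ IsAccOrd x C} δ := by
  refine ⟨fun x hx ↦ hx.1, fun x hx ↦ ?_,
    fun x hx hx0 hacc ↦ ⟨hx, hx0, fun y hy ↦ ?_⟩⟩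
  · obtain ⟨s, hxs, hsδ, hs⟩ := hδ.exists_isAccOrd_gt hcof hx
    exact ⟨s, ⟨hsδ, hs⟩, hxs.le⟩
  · obtain ⟨z, ⟨-, hz⟩, hyz, hzx⟩ := hacc y hy
    obtain ⟨w, hw, hyw, hwz⟩ := hz.2 y hyz
    exact ⟨w, hw, hyw, hwz.trans hzx⟩

end Clubs

theorem iSup_Iio_lt_of_lt_ord_cof {i δ : Ordinal.{u}} {g : Ordinal.{u} → Ordinal.{u}}
    (hi : i < δ.cof.ord) (hg : ∀ k < i, g k < δ) : ⨆ k : Iio i, g k < δ := by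
  refine Ordinal.lift_iSup_lt_of_lt_cof ?_ fun k ↦ hg k k.2
  rw [Cardinal.mk_Iio_ordinal, ← Ordinal.lift_cof, Cardinal.lift_lift, Cardinal.lift_lt]
  exact Cardinal.lt_ord.1 hi

noncomputable def climbSeq (next f : Ordinal.{u} → Ordinal.{u}) (i : Ordinal.{u}) :
    Ordinal.{u} :=
  Ordinal.limitRecOn i (next 0) (fun j gj ↦ next (max gj (f j)))
    fun j _ g ↦ ⨆ k : Iio j, g k k.2

section ClimbSeq

variable {next f : Ordinal.{u} → Ordinal.{u}}

@[simp]
theorem climbSeq_zero : climbSeq next f 0 = next 0 :=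
  Ordinal.limitRecOn_zero ..

@[simp]
theorem climbSeq_add_one (j : Ordinal) :
    climbSeq next f (j + 1) = next (max (climbSeq next f j) (f j)) :=
  Ordinal.limitRecOn_add_one ..

theorem climbSeq_of_isSuccLimit {i : Ordinal} (hi : IsSuccLimit i) :
    climbSeq next f i = ⨆ k : Iio i, climbSeq next f k :=
  Ordinal.limitRecOn_limit _ _ _ _ hi

variable {D : Set Ordinal.{u}} {δ W : Ordinal.{u}}

theorem climbSeq_spec (hD : IsClubOrd D δ)
    (hnext : ∀ x < δ, next x ∈ D ∧ x < next x ∧ next x < δ)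
    (hf : ∀ j < W, f j < δ) (hW : W ≤ δ.cof.ord) (i : Ordinal) (hi : i < W) :
    climbSeq next f i ∈ D ∧ climbSeq next f i < δ ∧
      ∀ j < i, climbSeq next f j < climbSeq next f i := by
  induction i using Ordinal.limitRecOn with
  | zero =>
    have := hnext 0 (hi.trans_le (hW.trans (Ordinal.ord_cof_le δ)))
    rw [climbSeq_zero]
    exact ⟨this.1, this.2.2, fun j hj ↦ absurd hj (not_lt_bot (a := j))⟩
  | add_one j ih =>
    have hj : j < W := (lt_add_one j).trans hi
    obtain ⟨-, hjδ, hjmono⟩ := ih hj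
    obtain ⟨hmem, hgt, hlt⟩ := hnext _ (max_lt hjδ (hf j hj))
    rw [climbSeq_add_one]
    refine ⟨hmem, hlt, fun k hk ↦ ?_⟩
    have hjlt := (le_max_left _ _).trans_lt hgt
    rcases (Order.lt_add_one_iff.1 hk).lt_or_eq with hkj | rfl
    · exact (hjmono k hkj).trans hjlt
    · exact hjlt
  | limit i hlim ih =>
    have hmono : ∀ j < i, climbSeq next f j < climbSeq next f i := fun j hj ↦ by
      have hj1 := hlim.add_one_lt hj
      rw [climbSeq_of_isSuccLimit hlim]
      exact ((ih _ hj1 (hj1.trans hi)).2.2 j (lt_add_one j)).trans_le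
        (Ordinal.le_iSup (fun k : Iio i ↦ climbSeq next f k) ⟨_, hj1⟩)
    have hlt : climbSeq next f i < δ := by
      rw [climbSeq_of_isSuccLimit hlim]
      exact iSup_Iio_lt_of_lt_ord_cof (hi.trans_le hW) fun k hk ↦ (ih k hk (hk.trans hi)).2.1
    refine ⟨hD.mem_of_isAccOrd hlt ⟨(hmono 0 hlim.bot_lt).ne_bot, fun y hy ↦ ?_⟩, hlt,
      hmono⟩
    rw [climbSeq_of_isSuccLimit hlim] at hy
    obtain ⟨⟨k, hk⟩, hyk⟩ := Ordinal.lt_iSup_iff.1 hy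
    exact ⟨_, (ih k hk (hk.trans hi)).1, hyk, hmono k hk⟩

end ClimbSeq

theorem isClubOrd_image_Iio {g : Ordinal.{u} → Ordinal.{u}} {W δ : Ordinal.{u}}
    (hmono : StrictMonoOn g (Iio W)) (hlt : ∀ i < W, g i < δ)
    (hcof : ∀ x < δ, ∃ i < W, x ≤ g i)
    (hcont : ∀ i < W, IsSuccLimit i → g i ≤ ⨆ k : Iio i, g k) :
    IsClubOrd (g '' Iio W) δ := by
  refine ⟨?_, fun x hx ↦ ?_, fun x hx hx0 hacc ↦ ?_⟩
  · rintro _ ⟨i, hi, rfl⟩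
    exact hlt i hi
  · obtain ⟨i, hi, hxi⟩ := hcof x hx
    exact ⟨g i, mem_image_of_mem g hi, hxi⟩
  -- the least `μ` with `x ≤ g μ` is a limit, and continuity at `μ` gives `g μ = x`
  set μ := sInf {i | i < W ∧ x ≤ g i}
  obtain ⟨hμW, hxμ⟩ : μ < W ∧ x ≤ g μ := csInf_mem (hcof x hx)
  have hbelow : ∀ k < μ, g k < x := fun k hk ↦
    not_le.1 fun hxk ↦ notMem_of_lt_csInf' hk ⟨hk.trans hμW, hxk⟩
  have habove : ∀ k < W, g k < x → k < μ := fun k hk hkx ↦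
    (hmono.lt_iff_lt hk hμW).1 (hkx.trans_le hxμ)
  rcases Ordinal.zero_or_succ_or_isSuccLimit μ with hμ | ⟨j, hjμ⟩ | hμ
  · obtain ⟨_, ⟨k, hk, rfl⟩, -, hkx⟩ := hacc 0 (pos_iff_ne_zero.2 hx0)
    exact absurd (habove k hk hkx) (hμ ▸ not_lt_bot)
  · have hj : j < μ := hjμ ▸ lt_succ j
    obtain ⟨_, ⟨k, hk, rfl⟩, hjk, hkx⟩ := hacc (g j) (hbelow j hj)
    have hkj := Order.lt_succ_iff.1 (hjμ ▸ habove k hk hkx)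
    exact absurd hjk (not_lt.2 ((hmono.le_iff_le hk (hj.trans hμW)).2 hkj))
  · refine ⟨μ, hμW, le_antisymm ?_ hxμ⟩
    exact (hcont μ hμW hμ).trans (Ordinal.iSup_le fun k ↦ (hbelow k k.2).le)

theorem exists_cofinal_ord_cof (δ : Ordinal.{u}) :
    ∃ f : Ordinal → Ordinal,
      (∀ j < δ.cof.ord, f j < δ) ∧ ∀ x < δ, ∃ j < δ.cof.ord, x ≤ f j := by
  obtain ⟨f, hf⟩ := Ordinal.exists_isFundamentalSeq (o := δ) rfl
  refine ⟨fun j ↦ if h : j < δ.cof.ord then f ⟨j, h⟩ else 0,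
    fun j hj ↦ by simp only [dif_pos hj]; exact (f ⟨j, hj⟩).2, fun x hx ↦ ?_⟩
  obtain ⟨_, ⟨j, rfl⟩, hxj⟩ := hf.isCofinal_range ⟨x, hx⟩
  exact ⟨j, j.2, by simp only [dif_pos (show (j : Ordinal) < δ.cof.ord from j.2)]; exact hxj⟩

theorem IsClubOrd.exists_subset_hasOrderType_ord_cof {D : Set Ordinal.{u}} {δ : Ordinal.{u}}
    (hD : IsClubOrd D δ) (hδ : IsSuccLimit δ) :
    ∃ η ⊆ D, IsClubOrd η δ ∧ HasOrderType η δ.cof.ord := by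
  obtain ⟨f, hfδ, hfcof⟩ := exists_cofinal_ord_cof δ
  choose! next hnext using (hD.isAccOrd hδ).2
  have hg := climbSeq_spec hD hnext hfδ le_rfl
  have hWlim : IsSuccLimit δ.cof.ord :=
    Cardinal.isSuccLimit_ord (Ordinal.aleph0_le_cof_iff.2 (Ordinal.one_lt_cof_iff.2 hδ))
  have hmono : StrictMonoOn (climbSeq next f) (Iio δ.cof.ord) := fun j _ i hi hji ↦
    (hg i hi).2.2 j hji
  refine ⟨_, image_subset_iff.2 fun i hi ↦ (hg i hi).1,
    isClubOrd_image_Iio hmono (fun i hi ↦ (hg i hi).2.1) (fun x hx ↦ ?_)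
      (fun i _ hi ↦ (climbSeq_of_isSuccLimit hi).le), _, hmono, rfl⟩
  obtain ⟨j, hj, hxj⟩ := hfcof x hx
  refine ⟨j + 1, hWlim.add_one_lt hj, hxj.trans ?_⟩
  rw [climbSeq_add_one]
  exact ((le_max_right _ _).trans_lt (hnext _ (max_lt (hg j hj).2.1 (hfδ j hj))).2.1).le

theorem aleph0_lt_cof_ord_aleph_two : ℵ₀ < (aleph 2 : Cardinal.{u}).ord.cof := by
  rw [show (2 : Ordinal) = 1 + 1 by norm_num, (Cardinal.isRegular_aleph_add_one 1).cof_ord]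
  exact aleph0_lt_aleph_one.trans (aleph_lt_aleph.2 (by norm_num))

theorem S21.isSuccLimit {δ : Ordinal} (hδ : S21 δ) : IsSuccLimit δ :=
  Ordinal.one_lt_cof_iff.1 (hδ.2 ▸ one_lt_aleph0.trans aleph0_lt_aleph_one)

def IsDiamondSeq (A : Ordinal → Set Ordinal) : Prop :=
  ∀ B ⊆ Iio (aleph 2).ord, ∀ C, IsClubOrd C (aleph 2).ord →
    ∃ δ, S21 δ ∧ δ ∈ C ∧ B ∩ Iio δ = A δ

theorem IsDiamondSeq.exists_clubGuessing {A : Ordinal.{u} → Set Ordinal.{u}}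
    (hA : IsDiamondSeq A) :
    ∃ η : Ordinal.{u} → Set Ordinal.{u},
      (∀ δ, S21 δ → IsClubOrd (η δ) δ ∧ HasOrderType (η δ) (aleph 1 : Cardinal.{u}).ord) ∧
      ∀ C, IsClubOrd C (aleph 2).ord → ∃ δ, S21 δ ∧ η δ ⊆ C := by
  have hη : ∀ δ, S21 δ → ∃ η, (IsClubOrd (A δ) δ → η ⊆ A δ) ∧
      IsClubOrd η δ ∧ HasOrderType η (aleph 1 : Cardinal.{u}).ord := by
    intro δ hδ
    by_cases hAδ : IsClubOrd (A δ) δ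
    · obtain ⟨η, hsub, hη⟩ := hAδ.exists_subset_hasOrderType_ord_cof hδ.isSuccLimit
      exact ⟨η, fun _ ↦ hsub, hδ.2 ▸ hη⟩
    · obtain ⟨η, -, hη⟩ :=
        (isClubOrd_Iio δ).exists_subset_hasOrderType_ord_cof hδ.isSuccLimit
      exact ⟨η, fun h ↦ absurd h hAδ, hδ.2 ▸ hη⟩
  choose! η hηA hη using hη
  refine ⟨η, hη, fun C hC ↦ ?_⟩
  have hCacc : IsAccOrd (aleph 2).ord C :=
    hC.isAccOrd (Cardinal.isSuccLimit_ord (aleph0_le_aleph 2))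
  obtain ⟨δ, hδ, ⟨hδω₂, hδC⟩, hCA⟩ :=
    hA C hC.1 _ (hCacc.isClubOrd_setOf_isAccOrd aleph0_lt_cof_ord_aleph_two)
  have hAδ : IsClubOrd (A δ) δ := hCA ▸ hδC.isClubOrd_inter_Iio hC hδω₂
  exact ⟨δ, hδ, (hηA δ hδ hAδ).trans (hCA ▸ inter_subset_left)⟩

section Lift

variable {δ : Ordinal.{u}}

theorem Ordinal.invFun_lift_lift (a : Ordinal.{u}) :
    Function.invFun Ordinal.lift.{v} (Ordinal.lift.{v} a) = a :=
  Function.leftInverse_invFun (fun _ _ ↦ Ordinal.lift_inj.1) a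

theorem s21_lift_iff : S21 (Ordinal.lift.{v} δ) ↔ S21 δ := by
  simp [S21, ← Ordinal.lift_cof]

theorem IsClubOrd.image_lift {C : Set Ordinal.{u}} (h : IsClubOrd C δ) :
    IsClubOrd (Ordinal.lift.{v} '' C) (Ordinal.lift.{v} δ) := by
  refine ⟨?_, fun x hx ↦ ?_, fun x hx hx0 hacc ↦ ?_⟩
  · rintro _ ⟨y, hy, rfl⟩
    exact Ordinal.lift_lt.2 (h.1 y hy)
  · obtain ⟨x, hx', rfl⟩ := Ordinal.lt_lift_iff.1 hx
    obtain ⟨y, hy, hxy⟩ := h.2.1 x hx'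
    exact ⟨_, mem_image_of_mem _ hy, Ordinal.lift_le.2 hxy⟩
  · obtain ⟨x, hx', rfl⟩ := Ordinal.lt_lift_iff.1 hx
    have hx0' : x ≠ 0 := fun hx ↦ hx0 (by rw [hx, Ordinal.lift_zero])
    refine mem_image_of_mem _ (h.2.2 x hx' hx0' fun y hy ↦ ?_)
    obtain ⟨_, ⟨z, hz, rfl⟩, hyz, hzx⟩ := hacc _ (Ordinal.lift_lt.2 hy)
    exact ⟨z, hz, Ordinal.lift_lt.1 hyz, Ordinal.lift_lt.1 hzx⟩

theorem IsClubOrd.preimage_lift {C : Set Ordinal.{max u v}}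
    (h : IsClubOrd C (Ordinal.lift.{v} δ)) : IsClubOrd (Ordinal.lift.{v} ⁻¹' C) δ := by
  refine ⟨fun x hx ↦ Ordinal.lift_lt.1 (h.1 _ hx), fun x hx ↦ ?_, fun x hx hx0 hacc ↦ ?_⟩
  · obtain ⟨y, hy, hxy⟩ := h.2.1 _ (Ordinal.lift_lt.2 hx)
    obtain ⟨y, -, rfl⟩ := Ordinal.lt_lift_iff.1 (h.1 y hy)
    exact ⟨y, hy, Ordinal.lift_le.1 hxy⟩
  · have hx0' : Ordinal.lift.{v} x ≠ 0 := fun hx ↦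
      hx0 (Ordinal.lift_inj.1 (hx.trans Ordinal.lift_zero.symm))
    refine h.2.2 _ (Ordinal.lift_lt.2 hx) hx0' fun y hy ↦ ?_
    obtain ⟨y, -, rfl⟩ := Ordinal.lt_lift_iff.1 hy
    obtain ⟨z, hz, hyz, hzx⟩ := hacc y (Ordinal.lift_lt.1 hy)
    exact ⟨_, hz, Ordinal.lift_lt.2 hyz, Ordinal.lift_lt.2 hzx⟩

theorem HasOrderType.image_lift {X : Set Ordinal.{u}} {α : Ordinal} (h : HasOrderType X α) :
    HasOrderType (Ordinal.lift.{v} '' X) α := by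
  obtain ⟨g, hg, rfl⟩ := h
  exact ⟨Ordinal.lift.{v} ∘ g, StrictMono.comp_strictMonoOn (fun _ _ ↦ Ordinal.lift_lt.2) hg,
    (image_comp ..).symm⟩

theorem HasOrderType.lift_right {X : Set Ordinal} (h : HasOrderType X δ) :
    HasOrderType X (Ordinal.lift.{v} δ) := by
  obtain ⟨g, hg, rfl⟩ := h
  have hIio : Iio (Ordinal.lift.{v} δ) = Ordinal.lift.{v} '' Iio δ := by
    ext
    exact Ordinal.lt_lift_iff
  refine ⟨g ∘ Function.invFun Ordinal.lift.{v}, ?_, ?_⟩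
  · rw [hIio]
    rintro _ ⟨a, ha, rfl⟩ _ ⟨b, hb, rfl⟩ hab
    simpa [Ordinal.invFun_lift_lift] using hg ha hb (Ordinal.lift_lt.1 hab)
  · rw [hIio, image_image]
    simp [Ordinal.invFun_lift_lift]

theorem IsDiamondSeq.comap_lift {A : Ordinal.{max u v} → Set Ordinal.{max u v}}
    (hA : IsDiamondSeq A) :
    IsDiamondSeq fun δ : Ordinal.{u} ↦ Ordinal.lift.{v} ⁻¹' A (Ordinal.lift.{v} δ) := by
  intro B hB C hC
  have hB' : Ordinal.lift.{v} '' B ⊆ Iio (aleph 2).ord := by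
    rintro _ ⟨x, hx, rfl⟩
    simpa using hB hx
  obtain ⟨_, hδ, ⟨δ, hδC, rfl⟩, hBA⟩ := hA _ hB' _ (by simpa using hC.image_lift.{u, v})
  refine ⟨δ, s21_lift_iff.1 hδ, hδC, ?_⟩
  ext x
  simp [← hBA, Ordinal.lift_inj]

end Lift

theorem stmt5 (A : Ordinal → Set Ordinal)
    (hdiamond : ∀ B ⊆ Set.Iio (aleph 2).ord, ∀ C, IsClubOrd C (aleph 2).ord →
      ∃ δ, S21 δ ∧ δ ∈ C ∧ B ∩ Set.Iio δ = A δ) :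
    ∃ η : Ordinal → Set Ordinal,
      (∀ δ, S21 δ → IsClubOrd (η δ) δ ∧ HasOrderType (η δ) (aleph 1).ord) ∧
      (∀ C, IsClubOrd C (aleph 2).ord →
        ∃ δ, S21 δ ∧ ∃ δ' < δ, {x ∈ η δ | δ' ≤ x} ⊆ C) := by
  obtain ⟨η, hη, hguess⟩ := (IsDiamondSeq.comap_lift.{0} hdiamond).exists_clubGuessing
  refine ⟨fun δ ↦ Ordinal.lift '' η (Function.invFun Ordinal.lift δ), fun δ hδ ↦ ?_,
    fun C hC ↦ ?_⟩
  · obtain ⟨δ, -, rfl⟩ :=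
      (Ordinal.lt_lift_iff (a := (aleph 2 : Cardinal.{0}).ord)).1 (hδ.1.trans_eq (by simp))
    obtain ⟨hclub, htype⟩ := hη δ (s21_lift_iff.1 hδ)
    simp only [Ordinal.invFun_lift_lift]
    exact ⟨hclub.image_lift, by simpa using htype.image_lift.lift_right⟩
  · obtain ⟨δ, hδ, hsub⟩ := hguess _ (IsClubOrd.preimage_lift (by simpa using hC))
    refine ⟨Ordinal.lift δ, s21_lift_iff.2 hδ, 0, (s21_lift_iff.2 hδ).isSuccLimit.bot_lt, ?_⟩
    rintro _ ⟨hx, -⟩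
    simp only [Ordinal.invFun_lift_lift] at hx
    obtain ⟨x, hx, rfl⟩ := hx
    exact hsub hx
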